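/- Let B be a field, A ⊆ B a subring which is an integral domain, and R = A + XB[X]. Then: (i) R is atomic if and only if R is a BFD, if and only if R is an HFD, if and only if A is a field; (ii) R is an FFD if and only if A is a field and the quotient group B*/A* is finite (where B* and A* denote the nonzero elements of B and the units of A, respectively, with A* viewed as a subgroup of B*); (iii) R is a UFD if and only if A is a field and B = A. -/

import Mathlib

namespace FactorizationPaper

variable {R : Type*} [CommRing R]

/-- `S` is a saturated multiplicatively closed subset of `R`:
it contains `1`, is closed under multiplication, and `x*y ∈ S` implies `x ∈ S` and `y ∈ S`. -/
def Saturated (S : Set R) : Prop :=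
  1 ∈ S ∧ (∀ x ∈ S, ∀ y ∈ S, x * y ∈ S) ∧ ∀ x y : R, x * y ∈ S → x ∈ S ∧ y ∈ S

/-- The submonoid of `R` associated to a saturated multiplicatively closed set. -/
def Saturated.submonoid {S : Set R} (hS : Saturated S) : Submonoid R where
  carrier := S
  one_mem' := hS.1
  mul_mem' := fun {a b} ha hb => hS.2.1 a ha b hb

section ElementDefs

variable (S : Set R) {N : Type*} [AddCommGroup N] [Module R N]

/-- `m ∼^S n` : `m` and `n` are S-associates. -/
def SAssoc (m n : N) : Prop := (∃ s ∈ S, m = s • n) ∧ (∃ s ∈ S, n = s • m)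

/-- `m ≈^S n` : `m` and `n` are S-strong associates. -/
def SStrongAssoc (m n : N) : Prop := ∃ u : R, IsUnit u ∧ u ∈ S ∧ m = u • n

/-- `m ≅^S n` : `m` and `n` are S-very strong associates. -/
def SVeryStrongAssoc (m n : N) : Prop :=
  SAssoc S m n ∧ ((m = 0 ∧ n = 0) ∨ ∀ s ∈ S, m = s • n → IsUnit s)

/-- `m` is S-primitive. -/
def SPrimitive (m : N) : Prop := ∀ s ∈ S, ∀ n : N, m = s • n → SAssoc S n m

/-- `m` is S-strongly primitive. -/
def SStronglyPrimitive (m : N) : Prop := ∀ s ∈ S, ∀ n : N, m = s • n → SStrongAssoc S n m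

/-- `m` is S-very strongly primitive. -/
def SVeryStronglyPrimitive (m : N) : Prop := ∀ s ∈ S, ∀ n : N, m = s • n → SVeryStrongAssoc S n m

/-- the three kinds of S-primitivity, indexed by `Fin 3` :
`0` = primitive, `1` = strongly primitive, `2` = very strongly primitive. -/
def PrimOf (k : Fin 3) (m : N) : Prop :=
  match k with
  | 0 => SPrimitive S m
  | 1 => SStronglyPrimitive S m
  | 2 => SVeryStronglyPrimitive S m

/-- `m = s • n` is a compact S-atomic factorization of `m`. -/
def IsCompactFactorization (m : N) (s : R) (n : N) : Prop :=
  s ∈ S ∧ SPrimitive S n ∧ m = s • n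

/-- `m = s₁ ⋯ s_k • n` (with the `sᵢ` the members of the list `l`, nonunits in `S`)
is an S-factorization of `m`, of length `l.length`. -/
def IsSFactorization (m : N) (l : List R) (n : N) : Prop :=
  (∀ s ∈ l, s ∈ S ∧ ¬ IsUnit s) ∧ m = l.prod • n

end ElementDefs

/-- `a ∼ b` : associates in `R` (i.e. S-associates with `S = R`, in `R` as an `R`-module). -/
def Assoc (a b : R) : Prop := SAssoc (Set.univ : Set R) a b

/-- `a ≈ b` : strong associates in `R`. -/
def StrongAssoc (a b : R) : Prop := SStrongAssoc (Set.univ : Set R) a b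

/-- `a ≅ b` : very strong associates in `R`. -/
def VeryStrongAssoc (a b : R) : Prop := SVeryStrongAssoc (Set.univ : Set R) a b

/-- `a` is irreducible. -/
def Irred (a : R) : Prop := ¬ IsUnit a ∧ ∀ b c : R, a = b * c → Assoc a b ∨ Assoc a c

/-- `a` is strongly irreducible. -/
def StrongIrred (a : R) : Prop :=
  ¬ IsUnit a ∧ ∀ b c : R, a = b * c → StrongAssoc a b ∨ StrongAssoc a c

/-- `a` is very strongly irreducible. -/
def VeryStrongIrred (a : R) : Prop :=
  ¬ IsUnit a ∧ ∀ b c : R, a = b * c → VeryStrongAssoc a b ∨ VeryStrongAssoc a c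

/-- the three kinds of irreducibility, indexed by `Fin 3` :
`0` = irreducible, `1` = strongly irreducible, `2` = very strongly irreducible. -/
def IrredOf (k : Fin 3) (a : R) : Prop :=
  match k with
  | 0 => Irred a
  | 1 => StrongIrred a
  | 2 => VeryStrongIrred a

section ElementDefs2

variable (S : Set R) {N : Type*} [AddCommGroup N] [Module R N]

/-- `m = s₁ ⋯ s_k • n` is an S-atomic factorization
(each `sᵢ` irreducible and in `S`, `n` S-primitive). -/
def IsSAtomicFactorization (m : N) (l : List R) (n : N) : Prop :=
  IsSFactorization S m l n ∧ (∀ s ∈ l, Irred s) ∧ SPrimitive S n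

/-- an (α, β)-S-factorization: each `sᵢ` is α (a kind of irreducible)
and `n` is S-β (a kind of S-primitive). -/
def IsABFactorization (kα kβ : Fin 3) (m : N) (l : List R) (n : N) : Prop :=
  IsSFactorization S m l n ∧ (∀ s ∈ l, IrredOf kα s) ∧ PrimOf S kβ n

/-- Isomorphism of S-atomic factorizations: same length, S-associate primitive parts,
and the irreducible parts match up to permutation and associates. -/
def FactorIso (l : List R) (n : N) (l' : List R) (n' : N) : Prop :=
  l.length = l'.length ∧ SAssoc S n n' ∧
    ∃ l'' : List R, l'.Perm l'' ∧ List.Forall₂ Assoc l l''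

end ElementDefs2

section SetDefs

variable (S : Set R) {N : Type*} [AddCommGroup N] [Module R N]

/-- `E ⊆ N` is compactly S-atomic. -/
def CompactlySAtomic (E : Set N) : Prop :=
  ∀ m ∈ E, m ≠ 0 → ∃ s n, IsCompactFactorization S m s n

/-- `E ⊆ N` is semi-S-factorable. -/
def SemiSFactorable (E : Set N) : Prop :=
  CompactlySAtomic S E ∧ ∀ m ∈ E, m ≠ 0 → ∀ s n s' n',
    IsCompactFactorization S m s n → IsCompactFactorization S m s' n' → Assoc s s'

/-- `E ⊆ N` is S-factorable. -/
def SFactorable (E : Set N) : Prop :=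
  SemiSFactorable S E ∧ ∀ m ∈ E, m ≠ 0 → ∀ s n s' n',
    IsCompactFactorization S m s n → IsCompactFactorization S m s' n' → SAssoc S n n'

/-- `S` splits `E ⊆ N`. -/
def Splits (E : Set N) : Prop :=
  SemiSFactorable S E ∧
    ∀ r : R, SPrimitive S r → ∀ m : N, SPrimitive S m →
      r • m ≠ 0 → r • m ∈ E → SPrimitive S (r • m)

end SetDefs

/-- The set of zero divisors of the module `M` in `R`. -/
def ZDiv (R : Type*) [CommRing R] (M : Type*) [AddCommGroup M] [Module R M] : Set R :=
  {r : R | ∃ m : M, m ≠ 0 ∧ r • m = 0}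

/-- The annihilator of `M` in `R`, as a set. -/
def AnnSet (R : Type*) [CommRing R] (M : Type*) [AddCommGroup M] [Module R M] : Set R :=
  {r : R | ∀ m : M, r • m = 0}

/-- The annihilator of `M` in `R`, as an ideal. -/
def AnnIdeal (R : Type*) [CommRing R] (M : Type*) [AddCommGroup M] [Module R M] : Ideal R where
  carrier := AnnSet R M
  zero_mem' := fun m => zero_smul R m
  add_mem' := fun {a b} ha hb m => by
    rw [add_smul, ha m, hb m, add_zero]
  smul_mem' := fun c x hx m => by
    rw [smul_eq_mul, mul_smul, hx m, smul_zero]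

section ModuleProps

variable (S : Set R) (N : Type*) [AddCommGroup N] [Module R N]

/-- `N` is S-présimplifiable. -/
def SPresimplifiable : Prop := ∀ s ∈ S, ∀ m : N, s • m = m → IsUnit s ∨ m = 0

/-- `N` is S-atomic. -/
def SAtomicModule : Prop := ∀ m : N, m ≠ 0 → ∃ l n, IsSAtomicFactorization S m l n

/-- `N` is (α, β)-S-atomic. -/
def ABAtomicModule (kα kβ : Fin 3) : Prop :=
  ∀ m : N, m ≠ 0 → ∃ l n, IsABFactorization S kα kβ m l n

/-- `N` is an S-UFM. -/
def SUFM : Prop := SAtomicModule S N ∧ ∀ m : N, m ≠ 0 → ∀ l n l' n',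
  IsSAtomicFactorization S m l n → IsSAtomicFactorization S m l' n' → FactorIso S l n l' n'

/-- `N` is an S-FFM. -/
def SFFM : Prop := SAtomicModule S N ∧ ∀ m : N, m ≠ 0 →
  ∃ Fs : Set (List R × N), Fs.Finite ∧
    ∀ l n, IsSAtomicFactorization S m l n → ∃ p ∈ Fs, FactorIso S l n p.1 p.2

/-- `N` is an S-BFM. -/
def SBFM : Prop := ∀ m : N, m ≠ 0 → ∃ B : ℕ,
  ∀ l n, IsSFactorization S m l n → l.length ≤ B

/-- `N` is an S-HFM. -/
def SHFM : Prop := SAtomicModule S N ∧ ∀ m : N, m ≠ 0 → ∀ l n l' n',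
  IsSAtomicFactorization S m l n → IsSAtomicFactorization S m l' n' → l.length = l'.length

end ModuleProps

section InE

variable (E : Set R)

/-- `R` is présimplifiable in `E`. -/
def PresimpIn : Prop := ∀ a ∈ E, a ≠ 0 → ¬ IsUnit a → ∀ r : R, a = r * a → IsUnit r ∨ a = 0

/-- `R` is atomic in `E`. -/
def AtomicIn : Prop := ∀ a ∈ E, a ≠ 0 → ¬ IsUnit a →
  ∃ l n, IsSAtomicFactorization (Set.univ : Set R) a l n

/-- `R` has unique factorization in `E`. -/
def UFIn : Prop := AtomicIn E ∧ ∀ a ∈ E, a ≠ 0 → ¬ IsUnit a → ∀ l n l' n',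
  IsSAtomicFactorization (Set.univ : Set R) a l n →
  IsSAtomicFactorization (Set.univ : Set R) a l' n' →
  FactorIso (Set.univ : Set R) l n l' n'

/-- `R` has finite factorization in `E`. -/
def FFIn : Prop := AtomicIn E ∧ ∀ a ∈ E, a ≠ 0 → ¬ IsUnit a →
  ∃ Fs : Set (List R × R), Fs.Finite ∧ ∀ l n,
    IsSAtomicFactorization (Set.univ : Set R) a l n →
      ∃ p ∈ Fs, FactorIso (Set.univ : Set R) l n p.1 p.2

/-- `R` is half factorial in `E`. -/
def HFIn : Prop := AtomicIn E ∧ ∀ a ∈ E, a ≠ 0 → ¬ IsUnit a → ∀ l n l' n',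
  IsSAtomicFactorization (Set.univ : Set R) a l n →
  IsSAtomicFactorization (Set.univ : Set R) a l' n' → l.length = l'.length

/-- `R` has bounded factorization in `E`. -/
def BFIn : Prop := ∀ a ∈ E, a ≠ 0 → ¬ IsUnit a →
  ∃ B : ℕ, ∀ l n, IsSFactorization (Set.univ : Set R) a l n → l.length ≤ B

end InE

/-- The set `T = S⁻¹S'` in the localization `R_S`. -/
def locT {S : Set R} (hS : Saturated S) (S' : Set R) : Set (Localization hS.submonoid) :=
  {x | ∃ s' ∈ S', ∃ t : hS.submonoid, x = Localization.mk s' t}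

section DomainDefs

variable (D : Type*) [CommRing D]

/-- two lists of ring elements agree up to order and associates. -/
def ListAssociated (l l' : List D) : Prop :=
  ∃ l'' : List D, l'.Perm l'' ∧ List.Forall₂ Associated l l''

/-- `D` is atomic: every nonzero nonunit is a finite product of irreducibles. -/
def DomAtomic : Prop := ∀ x : D, x ≠ 0 → ¬ IsUnit x →
  ∃ l : List D, (∀ a ∈ l, Irreducible a) ∧ x = l.prod

/-- `D` is a bounded factorization domain. -/
def DomBFD : Prop := ∀ x : D, x ≠ 0 → ¬ IsUnit x →
  ∃ B : ℕ, ∀ l : List D, (∀ a ∈ l, ¬ IsUnit a) → x = l.prod → l.length ≤ B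

/-- `D` is a half factorial domain. -/
def DomHFD : Prop := DomAtomic D ∧ ∀ x : D, x ≠ 0 → ¬ IsUnit x →
  ∀ l l' : List D, (∀ a ∈ l, Irreducible a) → x = l.prod →
    (∀ a ∈ l', Irreducible a) → x = l'.prod → l.length = l'.length

/-- `D` is a finite factorization domain. -/
def DomFFD : Prop := DomAtomic D ∧ ∀ x : D, x ≠ 0 → ¬ IsUnit x →
  ∃ Fs : Set (List D), Fs.Finite ∧ ∀ l : List D, (∀ a ∈ l, Irreducible a) → x = l.prod →
    ∃ l' ∈ Fs, ListAssociated D l l'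

/-- `D` is a unique factorization domain. -/
def DomUFD : Prop := DomAtomic D ∧ ∀ x : D, x ≠ 0 → ¬ IsUnit x →
  ∀ l l' : List D, (∀ a ∈ l, Irreducible a) → x = l.prod →
    (∀ a ∈ l', Irreducible a) → x = l'.prod → ListAssociated D l l'

end DomainDefs

section AXBXdefs

variable (B : Type*) [CommRing B] (A : Subring B)

/-- The ring `R = A + X·B[X]`, as a subring of `B[X]`. -/
def AXBX : Subring (Polynomial B) where
  carrier := {f | f.coeff 0 ∈ A}
  zero_mem' := by simp only [Set.mem_setOf_eq, Polynomial.coeff_zero]; exact zero_mem A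
  one_mem' := by
    simp only [Set.mem_setOf_eq, Polynomial.coeff_one, if_pos rfl]
    exact one_mem A
  add_mem' := fun {f g} hf hg => by
    simp only [Set.mem_setOf_eq, Polynomial.coeff_add] at *
    exact add_mem hf hg
  neg_mem' := fun {f} hf => by
    simp only [Set.mem_setOf_eq, Polynomial.coeff_neg] at *
    exact neg_mem hf
  mul_mem' := fun {f g} hf hg => by
    simp only [Set.mem_setOf_eq, Polynomial.mul_coeff_zero] at *
    exact mul_mem hf hg

/-- The saturated multiplicatively closed subset `S = (U(B) ∩ A) ∪ {u·Xⁿ : u ∈ U(B), n ≥ 1}`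
of `R = A + X·B[X]`. -/
def Sset : Set (AXBX B A) :=
  {f | (∃ u : B, IsUnit u ∧ u ∈ A ∧ (f : Polynomial B) = Polynomial.C u) ∨
       (∃ u : B, IsUnit u ∧ ∃ n : ℕ, 1 ≤ n ∧
          (f : Polynomial B) = Polynomial.C u * Polynomial.X ^ n)}

/-- The saturated multiplicatively closed subset `S₀ = U(B) ∩ A` of `A`. -/
def S0set : Set A := {a : A | IsUnit (a : B)}

end AXBXdefs

/-!
Evaluation at `0` is a ring retraction `R → A` of the inclusion `A → R`, so the units of
`R = A + X·B[X]` are the units of `A`. If `A` is not a field, pick a nonzero nonunit `a ∈ A`: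
in any factorization of `X` some factor `q` has `q(0) = 0`, and `q = a · (a⁻¹q)` with both
factors nonunits, so `X` has no factorization into irreducibles. If `A` is a field, the nonzero
units of `R` are exactly the elements of degree `0`, so the degree bounds the length of
factorizations (and a BFD is atomic). Moreover every irreducible of `R` stays irreducible in the
UFD `B[X]`: a factorization there can be rescaled by a constant into one in `R`. Hence two
factorizations of `x` in `R` match up to associates in `B[X]`, which gives half-factoriality,
and unique factorization when `A = B`. Up to associates in `R`, an irreducible divisor of `x`
is either `uX`, whose associate class is the coset `u A*`, or the rescaling to constant term `1`
of an irreducible factor of `x` in `B[X]`. So `R` is an FFD iff `B*/A*` is finite, as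
`X² = (uX)(u⁻¹X)` for every `u ∈ B*`; the same identity forces `A = B` in a UFD.
-/

section Factorization

variable {D : Type*} [CommRing D]

theorem domAtomic_of_domBFD (h : DomBFD D) : DomAtomic D := by
  classical
  intro x hx hxu
  obtain ⟨N, hN⟩ := h x hx hxu
  -- refine a factorization into nonunits until all factors are irreducible; `N` bounds the steps
  suffices H : ∀ k, ∀ l : List D, N - l.length = k → (∀ a ∈ l, ¬ IsUnit a) →
      x = l.prod →
      ∃ l' : List D, (∀ a ∈ l', Irreducible a) ∧ x = l'.prod from
    H _ [x] rfl (by simpa using hxu) (by simp)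
  intro k
  induction k using Nat.strong_induction_on with
  | _ k ih =>
    rintro l rfl hl hxl
    by_cases hirr : ∀ a ∈ l, Irreducible a
    · exact ⟨l, hirr, hxl⟩
    push Not at hirr
    obtain ⟨a, ha, hna⟩ := hirr
    obtain ⟨b, c, rfl, hb, hc⟩ : ∃ b c, a = b * c ∧ ¬ IsUnit b ∧ ¬ IsUnit c := by
      simpa [irreducible_iff, hl a ha] using hna
    set l' := b :: c :: l.erase (b * c)
    have hl' : ∀ a ∈ l', ¬ IsUnit a := by
      simp only [l', List.mem_cons]
      rintro a (rfl | rfl | ha')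
      exacts [hb, hc, hl a (List.mem_of_mem_erase ha')]
    have hxl' : x = l'.prod := by
      rw [hxl, ← List.prod_erase ha]; simp [l', mul_assoc]
    have hlen : l'.length = l.length + 1 := by
      have := List.length_pos_of_mem ha
      simp only [l', List.length_cons, List.length_erase_of_mem ha]
      omega
    have hbound := hN l' hl' hxl'
    exact ih _ (by omega) l' rfl hl' hxl'

theorem ListAssociated.exists_mem_associated_head {a : D} {l l' : List D}
    (h : ListAssociated D (a :: l) l') : ∃ b ∈ l', Associated a b := by
  obtain ⟨_, hperm, hab⟩ := h
  cases hab with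
  | cons hab _ => exact ⟨_, hperm.mem_iff.2 List.mem_cons_self, hab⟩

end Factorization

theorem length_le_of_additive_degree {M : Type*} [CommMonoidWithZero M] (ν : M → ℕ)
    (hmul : ∀ x y : M, x ≠ 0 → y ≠ 0 → ν (x * y) = ν x + ν y)
    (hunit : ∀ x : M, x ≠ 0 → ν x = 0 → IsUnit x) :
    ∀ l : List M, l.prod ≠ 0 → (∀ a ∈ l, ¬ IsUnit a) → l.length ≤ ν l.prod
  | [], _, _ => Nat.zero_le _
  | a :: l, hl0, hl => by
    rw [List.prod_cons] at hl0 ⊢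
    have ha : 1 ≤ ν a := Nat.one_le_iff_ne_zero.2 fun h0 =>
      hl a List.mem_cons_self (hunit a (left_ne_zero_of_mul hl0) h0)
    have ih := length_le_of_additive_degree ν hmul hunit l (right_ne_zero_of_mul hl0)
      fun b hb => hl b (List.mem_cons_of_mem a hb)
    rw [hmul _ _ (left_ne_zero_of_mul hl0) (right_ne_zero_of_mul hl0), List.length_cons]
    omega

theorem _root_.List.exists_perm_forall₂_of_rel {α : Type*} {r : α → α → Prop} :
    ∀ {l l' : List α}, Multiset.Rel r l l' → ∃ l'', l'.Perm l'' ∧ List.Forall₂ r l l''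
  | [], l', h => by
    rw [Multiset.coe_nil, Multiset.rel_zero_left, Multiset.coe_eq_zero] at h
    exact ⟨[], by rw [h], .nil⟩
  | a :: l, l', h => by
    classical
    rw [← Multiset.cons_coe] at h
    obtain ⟨b, m, hab, hrel, hm⟩ := Multiset.rel_cons_left.1 h
    have hb : b ∈ l' := by simp [← Multiset.mem_coe, hm]
    have herase : (l'.erase b : Multiset α) = m := by
      rw [← Multiset.coe_erase, hm, Multiset.erase_cons_head]
    obtain ⟨l'', hperm, hl''⟩ := List.exists_perm_forall₂_of_rel (herase ▸ hrel)
    exact ⟨b :: l'', (List.perm_cons_erase hb).trans (hperm.cons b), .cons hab hl''⟩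

theorem _root_.Set.Finite.setOf_length_le_forall_mem {α : Type*} {T : Set α} (hT : T.Finite)
    (n : ℕ) :
    {l : List α | l.length ≤ n ∧ ∀ a ∈ l, a ∈ T}.Finite := by
  have := hT.to_subtype
  refine ((List.finite_length_le T n).image (List.map Subtype.val)).subset ?_
  rintro l ⟨hn, hl⟩
  lift l to List T using hl
  exact ⟨l, by simpa using hn, rfl⟩

namespace AXBX

open Polynomial UniqueFactorizationMonoid

section CommRing

variable {B : Type*} [CommRing B] {A : Subring B}

theorem mem_iff {f : B[X]} : f ∈ AXBX B A ↔ f.coeff 0 ∈ A := Iff.rfl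

noncomputable def constCoeff : AXBX B A →+* A :=
  (Polynomial.constantCoeff.comp (AXBX B A).subtype).codRestrict A fun f => f.2

noncomputable def const : A →+* AXBX B A :=
  (C.comp A.subtype).codRestrict (AXBX B A) fun a => by simp [mem_iff]

@[simp] theorem coe_constCoeff (f : AXBX B A) : (constCoeff f : B) = (f : B[X]).coeff 0 := rfl

@[simp] theorem coe_const (a : A) : (const a : B[X]) = C (a : B) := rfl

theorem constCoeff_const (a : A) : constCoeff (const a) = a := by ext; simp

theorem isUnit_const_iff {a : A} : IsUnit (const a) ↔ IsUnit a :=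
  isUnit_map_of_leftInverse constCoeff constCoeff_const

theorem not_isUnit_of_coeff_zero_eq_zero [Nontrivial B] {f : AXBX B A}
    (hf : (f : B[X]).coeff 0 = 0) : ¬ IsUnit f := fun hu => by
  have h0 : constCoeff f = 0 := Subtype.ext hf
  simpa [h0] using hu.map constCoeff

noncomputable def unitX (u : Bˣ) : AXBX B A := ⟨C (u : B) * X, by simp [mem_iff]⟩

@[simp] theorem coe_unitX (u : Bˣ) : ((unitX u : AXBX B A) : B[X]) = C (u : B) * X := rfl

theorem unitX_mul_unitX_inv (u : Bˣ) :
    (unitX u * unitX u⁻¹ : AXBX B A) = unitX 1 * unitX 1 := by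
  ext1
  simp only [MulMemClass.coe_mul, coe_unitX, Units.val_one, C_1, one_mul]
  rw [mul_mul_mul_comm, ← C_mul, Units.mul_inv, C_1, one_mul]

end CommRing

section Domain

variable {B : Type*} [CommRing B] [IsDomain B] {A : Subring B}

theorem isUnit_iff {f : AXBX B A} : IsUnit f ↔ ∃ a : A, IsUnit a ∧ const a = f := by
  refine ⟨fun hf => ⟨constCoeff f, hf.map constCoeff, ?_⟩,
    fun ⟨a, ha, hf⟩ => hf ▸ ha.map const⟩
  obtain ⟨r, -, hr⟩ := Polynomial.isUnit_iff.1 (hf.map (AXBX B A).subtype)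
  ext1
  have hr : (f : B[X]) = C r := hr.symm
  rw [coe_const, coe_constCoeff, hr, coeff_C_zero]

theorem natDegree_coe_mul {f g : AXBX B A} (hf : f ≠ 0) (hg : g ≠ 0) :
    ((f * g : AXBX B A) : B[X]).natDegree = (f : B[X]).natDegree + (g : B[X]).natDegree :=
  Polynomial.natDegree_mul (by simpa using hf) (by simpa using hg)

theorem natDegree_coe_eq_zero_of_isUnit {f : AXBX B A} (hf : IsUnit f) :
    (f : B[X]).natDegree = 0 := by
  obtain ⟨a, -, rfl⟩ := isUnit_iff.1 hf
  simp

theorem isUnit_iff_natDegree_eq_zero (hA : IsField A) {f : AXBX B A} (hf : f ≠ 0) :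
    IsUnit f ↔ (f : B[X]).natDegree = 0 := by
  refine ⟨natDegree_coe_eq_zero_of_isUnit, fun h0 => isUnit_iff.2 ⟨constCoeff f, ?_, ?_⟩⟩
  · have hc : constCoeff f ≠ 0 := fun hc => hf <| Subtype.ext <| by
      rw [eq_C_of_natDegree_eq_zero h0, ← coe_constCoeff, hc]
      simp
    obtain ⟨b, hb⟩ := hA.mul_inv_cancel hc
    exact IsUnit.of_mul_eq_one b hb
  · ext1
    simp [← eq_C_of_natDegree_eq_zero h0]

theorem unitX_ne_zero (u : Bˣ) : (unitX u : AXBX B A) ≠ 0 := fun h => by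
  simpa using congrArg (fun f : AXBX B A => (f : B[X])) h

theorem not_isUnit_unitX (u : Bˣ) : ¬ IsUnit (unitX u : AXBX B A) :=
  not_isUnit_of_coeff_zero_eq_zero (by simp)

theorem associated_unitX_iff {u v : Bˣ} :
    Associated (unitX u : AXBX B A) (unitX v) ↔
      (u : Bˣ ⧸ (Units.map A.subtype.toMonoidHom).range) = v := by
  rw [QuotientGroup.eq]
  constructor
  · rintro ⟨w, hw⟩
    obtain ⟨a, ha, hwa⟩ := isUnit_iff.1 w.isUnit
    have hcoeff := congrArg (fun f : AXBX B A => (f : B[X]).coeff 1) hw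
    simp only [← hwa, Subring.coe_mul, coe_unitX, coe_const, coeff_mul_C, coeff_mul_X,
      coeff_C_zero] at hcoeff
    refine ⟨ha.unit, Units.ext ?_⟩
    simp [← hcoeff]
  · rintro ⟨a, ha⟩
    refine ⟨(isUnit_const_iff.2 a.isUnit).unit, Subtype.ext ?_⟩
    have ha : ((a : A) : B) = u⁻¹ * v := by simpa using congrArg Units.val ha
    simp only [IsUnit.unit_spec, MulMemClass.coe_mul, coe_unitX, coe_const, ha]
    rw [C_mul, mul_right_comm, ← mul_assoc, ← C_mul, Units.mul_inv, C_1, one_mul]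

theorem irreducible_unitX (hA : IsField A) (u : Bˣ) : Irreducible (unitX u : AXBX B A) := by
  refine irreducible_iff.2 ⟨not_isUnit_unitX u, fun f g hfg => ?_⟩
  have hf : f ≠ 0 := by rintro rfl; exact unitX_ne_zero u (by simpa using hfg)
  have hg : g ≠ 0 := by rintro rfl; exact unitX_ne_zero u (by simpa using hfg)
  have hdeg := natDegree_coe_mul hf hg
  rw [← hfg, coe_unitX, natDegree_C_mul_X _ u.ne_zero] at hdeg
  rcases Nat.add_eq_one_iff.1 hdeg.symm with ⟨h, -⟩ | ⟨-, h⟩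
  exacts [.inl ((isUnit_iff_natDegree_eq_zero hA hf).2 h),
    .inr ((isUnit_iff_natDegree_eq_zero hA hg).2 h)]

theorem length_le_natDegree (hA : IsField A) {x : AXBX B A} (hx : x ≠ 0)
    {l : List (AXBX B A)} (hl : ∀ q ∈ l, ¬ IsUnit q) (hxl : x = l.prod) :
    l.length ≤ (x : B[X]).natDegree := by
  subst hxl
  exact length_le_of_additive_degree (fun f : AXBX B A => (f : B[X]).natDegree)
    (fun _ _ => natDegree_coe_mul) (fun _ hf => (isUnit_iff_natDegree_eq_zero hA hf).2) l hx hl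

theorem domBFD_of_isField (hA : IsField A) : DomBFD (AXBX B A) := fun _ hx _ =>
  ⟨_, fun _ hl hxl => length_le_natDegree hA hx hl hxl⟩

theorem domAtomic_of_isField (hA : IsField A) : DomAtomic (AXBX B A) :=
  domAtomic_of_domBFD (domBFD_of_isField hA)

end Domain

section Field

variable {B : Type*} [Field B] {A : Subring B}

theorem exists_C_mul_mem_and_C_inv_mul_mem {f g : B[X]} (h : (f * g).coeff 0 ∈ A) :
    ∃ c : B, c ≠ 0 ∧ C c * f ∈ AXBX B A ∧ C c⁻¹ * g ∈ AXBX B A := by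
  simp only [mem_iff, coeff_C_mul]
  rw [mul_coeff_zero] at h
  by_cases hg : g.coeff 0 = 0
  · by_cases hf : f.coeff 0 = 0
    · exact ⟨1, one_ne_zero, by simp [hf], by simp [hg]⟩
    · exact ⟨(f.coeff 0)⁻¹, inv_ne_zero hf, by simp [hf], by simp [hg]⟩
  · exact ⟨g.coeff 0, hg, by rwa [mul_comm], by simp [hg]⟩

theorem irreducible_coe (hA : IsField A) {q : AXBX B A} (hq : Irreducible q) :
    Irreducible (q : B[X]) := by
  refine irreducible_iff.2 ⟨fun hu => hq.not_isUnit ?_, fun f g hfg => ?_⟩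
  · exact (isUnit_iff_natDegree_eq_zero hA hq.ne_zero).2 (natDegree_eq_zero_of_isUnit hu)
  have hf : f ≠ 0 := by rintro rfl; exact hq.ne_zero (Subtype.ext (by simpa using hfg))
  have hg : g ≠ 0 := by rintro rfl; exact hq.ne_zero (Subtype.ext (by simpa using hfg))
  -- two factors of positive degree would rescale into a proper factorization in `R`
  obtain ⟨c, hc, hcf, hcg⟩ := exists_C_mul_mem_and_C_inv_mul_mem (hfg ▸ q.2)
  have hsplit : q = ⟨C c * f, hcf⟩ * ⟨C c⁻¹ * g, hcg⟩ := by
    ext1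
    rw [MulMemClass.coe_mul, hfg, mul_mul_mul_comm, ← C_mul, mul_inv_cancel₀ hc, C_1, one_mul]
  rcases hq.isUnit_or_isUnit hsplit with hu | hu
  · left
    rw [isUnit_iff_degree_eq_zero, degree_eq_natDegree hf]
    simpa [natDegree_C_mul hc] using natDegree_coe_eq_zero_of_isUnit hu
  · right
    rw [isUnit_iff_degree_eq_zero, degree_eq_natDegree hg]
    simpa [natDegree_C_mul (inv_ne_zero hc)] using natDegree_coe_eq_zero_of_isUnit hu

theorem not_irreducible_of_coeff_zero_eq_zero {a : A} (ha0 : a ≠ 0) (ha : ¬ IsUnit a)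
    {q : AXBX B A} (hq : (q : B[X]).coeff 0 = 0) : ¬ Irreducible q := by
  have haB : (a : B) ≠ 0 := by exact_mod_cast ha0
  have hmem : C (a : B)⁻¹ * (q : B[X]) ∈ AXBX B A := by simp [mem_iff, hq]
  have hsplit : q = const a * ⟨_, hmem⟩ := by
    ext1
    rw [MulMemClass.coe_mul, coe_const, ← mul_assoc, ← C_mul, mul_inv_cancel₀ haB, C_1,
      one_mul]
  intro hirr
  rcases hirr.isUnit_or_isUnit hsplit with h | h
  · exact ha (isUnit_const_iff.1 h)
  · exact not_isUnit_of_coeff_zero_eq_zero (by simp [hq]) h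

theorem isField_of_domAtomic (h : DomAtomic (AXBX B A)) : IsField A := by
  refine ⟨exists_pair_ne A, mul_comm, fun {a} ha0 => ?_⟩
  by_contra hinv
  have ha : ¬ IsUnit a := fun hu => hinv hu.exists_right_inv
  obtain ⟨l, hl, hX⟩ := h (unitX 1) (unitX_ne_zero 1) (not_isUnit_unitX 1)
  obtain ⟨q, hq, hq0⟩ : ∃ q ∈ l, constCoeff q = 0 := by
    have h0 : (l.map constCoeff).prod = 0 := by
      rw [← map_list_prod, ← hX]
      ext
      simp
    simpa using List.prod_eq_zero_iff.1 h0
  exact not_irreducible_of_coeff_zero_eq_zero ha0 ha (congrArg Subtype.val hq0) (hl q hq)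

theorem rel_associated_coe_of_prod_eq (hA : IsField A) {l l' : List (AXBX B A)}
    (hl : ∀ q ∈ l, Irreducible q) (hl' : ∀ q ∈ l', Irreducible q) (h : l.prod = l'.prod) :
    Multiset.Rel (fun q t : AXBX B A => Associated (q : B[X]) t) l l' := by
  rw [← Multiset.rel_map]
  refine factors_unique ?_ ?_ ?_
  · simpa using fun q hq => irreducible_coe hA (hl q hq)
  · simpa using fun q hq => irreducible_coe hA (hl' q hq)
  · simp only [Multiset.map_coe, Multiset.prod_coe]
    rw [← SubmonoidClass.coe_list_prod, ← SubmonoidClass.coe_list_prod, h]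
    exact Associated.refl _

theorem domHFD_of_isField (hA : IsField A) : DomHFD (AXBX B A) :=
  ⟨domAtomic_of_isField hA, fun _ _ _ _ _ hl hxl hl' hxl' => by
    simpa using Multiset.card_eq_card_of_rel
      (rel_associated_coe_of_prod_eq hA hl hl' (hxl.symm.trans hxl'))⟩

theorem associated_of_coe_eq_mul_C (hA : IsField A) {q t : AXBX B A} {c : B} (hc : c ∈ A)
    (hc0 : c ≠ 0) (h : (t : B[X]) = q * C c) : Associated q t := by
  have hu : IsUnit (const ⟨c, hc⟩ : AXBX B A) := by
    refine (isUnit_iff_natDegree_eq_zero hA fun h0 => hc0 ?_).2 (by simp)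
    simpa using congrArg (fun f : AXBX B A => (f : B[X]).coeff 0) h0
  exact ⟨hu.unit, Subtype.ext (by simp [h])⟩

/-- `p` rescaled to constant term `1`; junk value `0` when `p(0) = 0`. -/
noncomputable def normalizeConst (p : B[X]) : AXBX B A :=
  ⟨C (p.coeff 0)⁻¹ * p, by by_cases h : p.coeff 0 = 0 <;> simp [mem_iff, h]⟩

theorem normalizeConst_mul_C (p : B[X]) {w : B} (hw : w ≠ 0) :
    (normalizeConst (p * C w) : AXBX B A) = normalizeConst p := by
  ext1
  have hCw : C w⁻¹ * C w = 1 := by rw [← C_mul, inv_mul_cancel₀ hw, C_1]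
  simp only [normalizeConst, coeff_mul_C, mul_inv, C_mul]
  linear_combination (C (p.coeff 0)⁻¹ * p) * hCw

theorem associated_normalizeConst (hA : IsField A) {q : AXBX B A}
    (h0 : (q : B[X]).coeff 0 ≠ 0) :
    Associated (normalizeConst (q : B[X])) q :=
  associated_of_coe_eq_mul_C hA q.2 h0 <| by
    change (q : B[X]) = C ((q : B[X]).coeff 0)⁻¹ * q * C ((q : B[X]).coeff 0)
    rw [mul_right_comm, ← C_mul, inv_mul_cancel₀ h0, C_1, one_mul]

theorem exists_unitX_eq_of_coeff_zero_eq_zero (hA : IsField A) {q : AXBX B A}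
    (hq : Irreducible q) (h0 : (q : B[X]).coeff 0 = 0) : ∃ u : Bˣ, unitX u = q := by
  obtain ⟨h, hh⟩ := X_dvd_iff.2 h0
  obtain ⟨r, hr, rfl⟩ := Polynomial.isUnit_iff.1
    (((irreducible_coe hA hq).isUnit_or_isUnit hh).resolve_left not_isUnit_X)
  exact ⟨hr.unit, Subtype.ext (by rw [coe_unitX, IsUnit.unit_spec, hh, mul_comm])⟩

theorem domFFD_of_isField (hA : IsField A)
    (hfin : Finite (Bˣ ⧸ (Units.map A.subtype.toMonoidHom).range)) : DomFFD (AXBX B A) := by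
  classical
  refine ⟨domAtomic_of_isField hA, fun x hx _ => ?_⟩
  set T : Set (AXBX B A) := normalizeConst '' {p | p ∈ factors (x : B[X])} ∪
    Set.range fun c : Bˣ ⧸ (Units.map A.subtype.toMonoidHom).range => unitX c.out
  have hT : T.Finite := ((factors _).finite_toSet.image _).union (Set.finite_range _)
  have hrep : ∀ q, Irreducible q → q ∣ x → ∃ t ∈ T, Associated q t := by
    intro q hq hqx
    by_cases h0 : (q : B[X]).coeff 0 = 0
    · obtain ⟨u, rfl⟩ := exists_unitX_eq_of_coeff_zero_eq_zero hA hq h0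
      exact ⟨_, .inr ⟨_, rfl⟩, associated_unitX_iff.2 (QuotientGroup.out_eq' _).symm⟩
    · obtain ⟨p, hp, w, hw⟩ := exists_mem_factors_of_dvd (by simpa using hx)
        (irreducible_coe hA hq) (map_dvd (AXBX B A).subtype hqx)
      obtain ⟨c, hc, hcw⟩ := Polynomial.isUnit_iff.1 w.isUnit
      refine ⟨normalizeConst p, .inl ⟨p, hp, rfl⟩, ?_⟩
      rw [← hw, ← hcw, normalizeConst_mul_C _ hc.ne_zero]
      exact (associated_normalizeConst hA h0).symm
  choose! rep hrepT hrep using hrep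
  have hdvd : ∀ l : List (AXBX B A), x = l.prod → ∀ q ∈ l, q ∣ x := fun l hxl q hq =>
    hxl ▸ List.dvd_prod hq
  refine ⟨{l | l.length ≤ (x : B[X]).natDegree ∧ ∀ t ∈ l, t ∈ T},
    Set.Finite.setOf_length_le_forall_mem hT _,
    fun l hl hxl => ⟨l.map rep, ⟨?_, ?_⟩, l.map rep, .refl _, ?_⟩⟩
  · simpa using length_le_natDegree hA hx (fun q hq => (hl q hq).not_isUnit) hxl
  · exact List.forall_mem_map.2 fun q hq => hrepT q (hl q hq) (hdvd l hxl q hq)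
  · exact List.forall₂_map_right_iff.2
      (List.forall₂_same.2 fun q hq => hrep q (hl q hq) (hdvd l hxl q hq))

theorem unitX_one_mul_unitX_one_ne_zero : (unitX 1 * unitX 1 : AXBX B A) ≠ 0 :=
  mul_ne_zero (unitX_ne_zero 1) (unitX_ne_zero 1)

theorem not_isUnit_unitX_one_mul_unitX_one : ¬ IsUnit (unitX 1 * unitX 1 : AXBX B A) :=
  fun hu => not_isUnit_unitX 1 (isUnit_of_mul_isUnit_left hu)

theorem finite_of_domFFD (h : DomFFD (AXBX B A)) :
    Finite (Bˣ ⧸ (Units.map A.subtype.toMonoidHom).range) := by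
  have hA := isField_of_domAtomic h.1
  obtain ⟨Fs, hFs, hfac⟩ := h.2 _ unitX_one_mul_unitX_one_ne_zero
    not_isUnit_unitX_one_mul_unitX_one
  -- `X² = (uX)(u⁻¹X)` for every `u`; a factor associated to `uX` determines the class of `u`
  set classes : AXBX B A → Set (Bˣ ⧸ (Units.map A.subtype.toMonoidHom).range) :=
    fun y => {c | ∃ u : Bˣ, (u : Bˣ ⧸ _) = c ∧ Associated (unitX u) y}
  have hsub : ∀ y, (classes y).Subsingleton := by
    rintro y _ ⟨u, rfl, hu⟩ _ ⟨v, rfl, hv⟩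
    exact associated_unitX_iff.1 (hu.trans hv.symm)
  refine Set.finite_univ_iff.1 <| (hFs.biUnion fun l _ =>
    l.finite_toSet.biUnion fun y _ => (hsub y).finite).subset fun c _ => ?_
  obtain ⟨u, rfl⟩ := QuotientGroup.mk_surjective c
  obtain ⟨l, hl, hul⟩ := hfac [unitX u, unitX u⁻¹] (by simp [irreducible_unitX hA])
    (by simp [unitX_mul_unitX_inv])
  obtain ⟨y, hy, huy⟩ := hul.exists_mem_associated_head
  exact Set.mem_biUnion hl (Set.mem_biUnion hy ⟨u, rfl, huy⟩)

theorem mem_of_domUFD (h : DomUFD (AXBX B A)) (b : B) : b ∈ A := by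
  obtain rfl | hb := eq_or_ne b 0
  · exact A.zero_mem
  have hA := isField_of_domAtomic h.1
  obtain ⟨u, rfl⟩ : ∃ u : Bˣ, (u : B) = b := ⟨Units.mk0 b hb, rfl⟩
  -- `X · X = (uX)(u⁻¹X)`, so `X` is associated to `uX` or to `u⁻¹X`
  obtain ⟨y, hy, h1y⟩ := (h.2 _ unitX_one_mul_unitX_one_ne_zero
    not_isUnit_unitX_one_mul_unitX_one [unitX 1, unitX 1] [unitX u, unitX u⁻¹]
    (by simp [irreducible_unitX hA]) (by simp) (by simp [irreducible_unitX hA])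
    (by simp [unitX_mul_unitX_inv])).exists_mem_associated_head
  have hu : u ∈ (Units.map A.subtype.toMonoidHom).range := by
    simp only [List.mem_cons, List.not_mem_nil, or_false] at hy
    rcases hy with rfl | rfl <;> simpa using QuotientGroup.eq.1 (associated_unitX_iff.1 h1y)
  obtain ⟨a, rfl⟩ := hu
  exact (a : A).2

theorem domUFD_of_isField (hA : IsField A) (hB : ∀ b : B, b ∈ A) : DomUFD (AXBX B A) := by
  refine ⟨domAtomic_of_isField hA, fun x _ _ l l' hl hxl hl' hxl' =>
    List.exists_perm_forall₂_of_rel <|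
      (rel_associated_coe_of_prod_eq hA hl hl' (hxl.symm.trans hxl')).mono ?_⟩
  rintro q - t - ⟨w, hw⟩
  obtain ⟨c, hc, hcw⟩ := Polynomial.isUnit_iff.1 w.isUnit
  exact associated_of_coe_eq_mul_C hA (hB c) hc.ne_zero (by rw [← hw, hcw])

end Field

end AXBX

theorem statement19 (B : Type*) [Field B] (A : Subring B) :
    ((DomAtomic (AXBX B A) ↔ DomBFD (AXBX B A)) ∧
     (DomBFD (AXBX B A) ↔ DomHFD (AXBX B A)) ∧
     (DomHFD (AXBX B A) ↔ IsField A)) ∧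
    (DomFFD (AXBX B A) ↔
      (IsField A ∧ Finite (Bˣ ⧸ (Units.map (A.subtype.toMonoidHom)).range))) ∧
    (DomUFD (AXBX B A) ↔ (IsField A ∧ ∀ b : B, b ∈ A)) := by
  have atomic_iff_isField : DomAtomic (AXBX B A) ↔ IsField A :=
    ⟨AXBX.isField_of_domAtomic, AXBX.domAtomic_of_isField⟩
  have bfd_iff_isField : DomBFD (AXBX B A) ↔ IsField A :=
    ⟨fun h => atomic_iff_isField.1 (domAtomic_of_domBFD h), AXBX.domBFD_of_isField⟩
  have hfd_iff_isField : DomHFD (AXBX B A) ↔ IsField A :=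
    ⟨fun h => atomic_iff_isField.1 h.1, AXBX.domHFD_of_isField⟩
  refine ⟨⟨atomic_iff_isField.trans bfd_iff_isField.symm,
    bfd_iff_isField.trans hfd_iff_isField.symm, hfd_iff_isField⟩, ?_, ?_⟩
  · exact ⟨fun h => ⟨AXBX.isField_of_domAtomic h.1, AXBX.finite_of_domFFD h⟩,
      fun h => AXBX.domFFD_of_isField h.1 h.2⟩
  · exact ⟨fun h => ⟨AXBX.isField_of_domAtomic h.1, AXBX.mem_of_domUFD h⟩,
      fun h => AXBX.domUFD_of_isField h.1 h.2⟩

end FactorizationPaper
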